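/- arXiv:1210.3279 — 2 statements merged into one kernel-verified Lean document; each statement's English description precedes it below -/
import Mathlib

section
/- There exists a constant c > 0 such that for every n ≥ 1, the hidden shift certificate structure on 2n variables admits a dual-feasible solution whose objective value is at least c·n^{1/3}. -/
/-- A dual-feasible solution for the learning graph program of a certificate
structure `C` on `n` variables. -/
def DualFeasible (n : ℕ) (C : Finset (Finset (Finset (Fin n))))
    (α : Finset (Fin n) → Finset (Finset (Fin n)) → ℝ) : Prop :=
  (∀ (S : Finset (Fin n)), ∀ j ∉ S,
      ∑ M ∈ C, (α S M - α (insert j S) M) ^ 2 ≤ 1) ∧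
  (∀ (S : Finset (Fin n)), ∀ M ∈ C, S ∈ M → α S M = 0)

/-- The hidden shift certificate structure on `2n` variables, with variables
indexed by `Fin (2n)` (`0`-based).  In `1`-based terms, for each shift
`d ∈ [n]` the member `M_d` consists of all `S` containing a pair
`{a, n+1+((a+d) mod n)}` with `a ∈ [n]`.  Here `d` and `a` are represented by
the `0`-based values `d₀ = d - 1` and `a₀ = a - 1` in `Fin n`, so the pair
becomes `{a₀, n + ((a₀ + d₀ + 2) mod n)}` in `Fin (2n)`. -/
def hiddenShiftCert (n : ℕ) : Finset (Finset (Finset (Fin (2 * n)))) :=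
  Finset.univ.image fun d : Fin n =>
    Finset.univ.filter fun S : Finset (Fin (2 * n)) =>
      ∃ a : Fin n,
        (⟨a.1, by have := a.2; omega⟩ : Fin (2 * n)) ∈ S ∧
        (⟨n + ((a.1 + d.1 + 2) % n), by
            have h := a.2
            have h2 : (a.1 + d.1 + 2) % n < n := Nat.mod_lt _ (by omega)
            omega⟩ : Fin (2 * n)) ∈ S

/-!
Take `α_S(M) = f(|S|)` for `S ∉ M` (and `0` for `S ∈ M`), with the ramp `f(k) = max (A - kδ) 0`.
Adding a variable `j` to `S` changes `α` by at most `δ` on the certificates it does not complete,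
costing at most `nδ²`. It completes at most `|S|` certificates: the completing pair joins `j` to a
point of `S`, and distinct shifts `d` share no pair `{a, n+1+((a+d) mod n)}`. Those cost
`k f(k)² ≤ A³/δ` with `k = |S|`. With `t = n^{1/6}`, `A = 1/(2t)` and `δ = 1/(2t³)` both costs are
`1/4`, and the objective is `√n · A = n^{1/3}/2`.
-/

open Finset

section DualSolution

variable {m : ℕ} {C : Finset (Finset (Finset (Fin m)))}

def levelDual (f : ℕ → ℝ) (S : Finset (Fin m)) (M : Finset (Finset (Fin m))) : ℝ :=
  if S ∈ M then 0 else f #S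

theorem dualFeasible_levelDual (f : ℕ → ℝ)
    (hup : ∀ M ∈ C, ∀ S j, S ∈ M → insert j S ∈ M)
    (henter : ∀ S, ∀ j ∉ S, #{M ∈ C | S ∉ M ∧ insert j S ∈ M} ≤ #S)
    (hstep : ∀ k, #C * (f k - f (k + 1)) ^ 2 ≤ 1 / 2)
    (hjump : ∀ k : ℕ, k * f k ^ 2 ≤ 1 / 2) :
    DualFeasible m C (levelDual f) := by
  refine ⟨fun S j hj => ?_, fun S M _ hS => if_pos hS⟩
  set step := (f #S - f (#S + 1)) ^ 2
  rw [← sum_filter_add_sum_filter_not C fun M => S ∉ M ∧ insert j S ∈ M]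
  have hentering : ∀ M ∈ C.filter fun M => S ∉ M ∧ insert j S ∈ M,
      (levelDual f S M - levelDual f (insert j S) M) ^ 2 = f #S ^ 2 := by
    intro M hM
    obtain ⟨-, hS, hjS⟩ := mem_filter.1 hM
    simp [levelDual, hS, hjS]
  have hother : ∀ M ∈ C.filter fun M => ¬(S ∉ M ∧ insert j S ∈ M),
      (levelDual f S M - levelDual f (insert j S) M) ^ 2 ≤ step := by
    intro M hM
    obtain ⟨hMC, hM⟩ := mem_filter.1 hM
    by_cases hS : S ∈ M
    · simp [levelDual, hS, hup M hMC S j hS, step, sq_nonneg]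
    · have hjS : insert j S ∉ M := fun h => hM ⟨hS, h⟩
      simp [levelDual, hS, hjS, card_insert_of_notMem hj, step]
  have h₁ := calc
    ∑ M ∈ C.filter fun M => S ∉ M ∧ insert j S ∈ M,
        (levelDual f S M - levelDual f (insert j S) M) ^ 2
      = #{M ∈ C | S ∉ M ∧ insert j S ∈ M} * f #S ^ 2 := by
        rw [sum_congr rfl hentering, sum_const, nsmul_eq_mul]
    _ ≤ #S * f #S ^ 2 := by gcongr; exact henter S j hj
    _ ≤ 1 / 2 := hjump #S
  have h₂ := calc
    ∑ M ∈ C.filter fun M => ¬(S ∉ M ∧ insert j S ∈ M),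
        (levelDual f S M - levelDual f (insert j S) M) ^ 2
      ≤ #{M ∈ C | ¬(S ∉ M ∧ insert j S ∈ M)} * step := by
        simpa using sum_le_sum hother
    _ ≤ #C * step := by gcongr; exact filter_subset _ C
    _ ≤ 1 / 2 := hstep #S
  linarith

theorem sum_sq_levelDual_empty (f : ℕ → ℝ) (hC : ∀ M ∈ C, ∅ ∉ M) :
    ∑ M ∈ C, levelDual f ∅ M ^ 2 = #C * f 0 ^ 2 := by
  rw [← nsmul_eq_mul, ← sum_const]
  exact sum_congr rfl fun M hM => by simp [levelDual, hC M hM]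

end DualSolution

section Ramp

def ramp (A δ : ℝ) (k : ℕ) : ℝ := max (A - k * δ) 0

variable {A δ : ℝ}

theorem ramp_zero (hA : 0 ≤ A) : ramp A δ 0 = A := by simp [ramp, hA]

theorem sq_ramp_sub_ramp_succ_le (k : ℕ) : (ramp A δ k - ramp A δ (k + 1)) ^ 2 ≤ δ ^ 2 := by
  rw [sq_le_sq]
  refine (abs_max_sub_max_le_abs _ _ _).trans (le_of_eq ?_)
  push_cast
  ring_nf

theorem cast_mul_sq_ramp_le (hA : 0 ≤ A) (hδ : 0 < δ) (k : ℕ) :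
    k * ramp A δ k ^ 2 ≤ A ^ 3 / δ := by
  rcases le_total A (k * δ) with hkA | hAk
  · rw [show ramp A δ k = 0 from max_eq_right (sub_nonpos.2 hkA), zero_pow two_ne_zero, mul_zero]
    positivity
  · have hramp : ramp A δ k = A - k * δ := max_eq_left (sub_nonneg.2 hAk)
    have hk : (k : ℝ) ≤ A / δ := (le_div_iff₀ hδ).2 hAk
    have hkδ : 0 ≤ (k : ℝ) * δ := by positivity
    calc (k : ℝ) * ramp A δ k ^ 2 ≤ A / δ * A ^ 2 := by
          rw [hramp]; gcongr; linarith
      _ = A ^ 3 / δ := by ring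

end Ramp

section PairCert

variable {ι κ V : Type*} [Fintype κ] [Fintype V] [DecidableEq V]

def pairCert (u v : κ → V) : Finset (Finset V) :=
  univ.filter fun S => ∃ a, u a ∈ S ∧ v a ∈ S

variable {u v : κ → V} {S : Finset V}

theorem mem_pairCert : S ∈ pairCert u v ↔ ∃ a, u a ∈ S ∧ v a ∈ S := by
  simp [pairCert]

theorem insert_mem_pairCert (j : V) (hS : S ∈ pairCert u v) : insert j S ∈ pairCert u v := by
  obtain ⟨a, hu, hv⟩ := mem_pairCert.1 hS
  exact mem_pairCert.2 ⟨a, mem_insert_of_mem hu, mem_insert_of_mem hv⟩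

theorem empty_notMem_pairCert : ∅ ∉ pairCert u v := by
  simp [mem_pairCert]

theorem exists_mem_of_insert_mem_pairCert (hloop : ∀ a, u a ≠ v a) {j : V}
    (hS : S ∉ pairCert u v) (hjS : insert j S ∈ pairCert u v) :
    ∃ s ∈ S, ∃ a, s(u a, v a) = s(s, j) := by
  obtain ⟨a, hu, hv⟩ := mem_pairCert.1 hjS
  rcases mem_insert.1 hu with rfl | hu
  · exact ⟨v a, (mem_insert.1 hv).resolve_left (hloop a).symm, a, Sym2.eq_swap⟩
  · have hv : v a = j := (mem_insert.1 hv).resolve_right fun hv => hS (mem_pairCert.2 ⟨a, hu, hv⟩)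
    exact ⟨u a, hu, a, by rw [hv]⟩

variable {u v : ι → κ → V}

theorem card_filter_image_pairCert_le [Fintype ι] (hloop : ∀ i a, u i a ≠ v i a)
    (hdisj : ∀ i i' a a', s(u i a, v i a) = s(u i' a', v i' a') → i = i') (S : Finset V) (j : V) :
    #{M ∈ univ.image fun i => pairCert (u i) (v i) | S ∉ M ∧ insert j S ∈ M} ≤ #S := by
  classical
  rw [filter_image]
  refine card_image_le.trans (card_le_card_of_forall_subsingleton
    (fun i s => ∃ a, s(u i a, v i a) = s(s, j)) (fun i hi => ?_) fun s _ => ?_)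
  · obtain ⟨-, hS, hjS⟩ := mem_filter.1 hi
    exact exists_mem_of_insert_mem_pairCert (hloop i) hS hjS
  · rintro i ⟨-, a, ha⟩ i' ⟨-, a', ha'⟩
    exact hdisj i i' a a' (ha.trans ha'.symm)

theorem pairCert_injective [Nonempty κ] (hloop : ∀ i a, u i a ≠ v i a)
    (hdisj : ∀ i i' a a', s(u i a, v i a) = s(u i' a', v i' a') → i = i') :
    Function.Injective fun i => pairCert (u i) (v i) := by
  intro i i' (h : pairCert (u i) (v i) = pairCert (u i') (v i'))
  obtain a := Classical.arbitrary κ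
  have hpair : {u i a, v i a} ∈ pairCert (u i') (v i') :=
    h ▸ mem_pairCert.2 ⟨a, by simp, by simp⟩
  obtain ⟨a', hu, hv⟩ := mem_pairCert.1 hpair
  refine (hdisj i' i a' a ?_).symm
  simp only [mem_insert, mem_singleton] at hu hv
  have := hloop i' a'
  rcases hu with hu | hu <;> rcases hv with hv | hv <;> simp_all [Sym2.eq_swap]

end PairCert

section HiddenShift

variable {n : ℕ}

def hiddenShiftLeft (n : ℕ) (a : Fin n) : Fin (2 * n) := ⟨a, by omega⟩

def hiddenShiftRight (n : ℕ) (d a : Fin n) : Fin (2 * n) :=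
  ⟨n + (a + d + 2) % n, by have := Nat.mod_lt (a + d + 2) a.pos; omega⟩

theorem hiddenShiftCert_eq_image_pairCert (n : ℕ) :
    hiddenShiftCert n =
      univ.image fun d => pairCert (hiddenShiftLeft n) (hiddenShiftRight n d) := by
  -- not `rfl`: `hiddenShiftCert` decides `∃ a : Fin n, _` by `Nat.decidableExistsFin`
  unfold hiddenShiftCert pairCert
  congr! 3

theorem hiddenShiftLeft_ne_right (a d a' : Fin n) : hiddenShiftLeft n a ≠ hiddenShiftRight n d a' :=
  fun h => by have := congrArg Fin.val h; simp [hiddenShiftLeft, hiddenShiftRight] at this; omega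

theorem eq_of_sym2_hiddenShift_eq {d d' a a' : Fin n}
    (h : s(hiddenShiftLeft n a, hiddenShiftRight n d a) =
      s(hiddenShiftLeft n a', hiddenShiftRight n d' a')) : d = d' := by
  rcases Sym2.eq_iff.1 h with ⟨ha, hd⟩ | ⟨h, -⟩
  · obtain rfl : a = a' := by simpa [hiddenShiftLeft, Fin.ext_iff] using ha
    have hmod : (a + 2 + d) % n = (a + 2 + d') % n := by
      simpa [hiddenShiftRight, Fin.ext_iff, add_right_comm] using hd
    exact Fin.ext ((Nat.ModEq.add_left_cancel' _ hmod).eq_of_lt_of_lt d.2 d'.2)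
  · exact absurd h (hiddenShiftLeft_ne_right a d' a')

theorem card_hiddenShiftCert (n : ℕ) : #(hiddenShiftCert n) = n := by
  rw [hiddenShiftCert_eq_image_pairCert]
  rcases Nat.eq_zero_or_pos n with rfl | hn
  · simp
  · have : NeZero n := ⟨hn.ne'⟩
    rw [card_image_of_injective _ (pairCert_injective (fun _ a => hiddenShiftLeft_ne_right a _ a)
      fun _ _ _ _ => eq_of_sym2_hiddenShift_eq), card_univ, Fintype.card_fin]

theorem card_filter_hiddenShiftCert_le (S : Finset (Fin (2 * n))) (j : Fin (2 * n)) :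
    #{M ∈ hiddenShiftCert n | S ∉ M ∧ insert j S ∈ M} ≤ #S := by
  rw [hiddenShiftCert_eq_image_pairCert]
  exact card_filter_image_pairCert_le (fun _ a => hiddenShiftLeft_ne_right a _ a)
    (fun _ _ _ _ => eq_of_sym2_hiddenShift_eq) S j

theorem insert_mem_of_mem_hiddenShiftCert {M : Finset (Finset (Fin (2 * n)))}
    (hM : M ∈ hiddenShiftCert n) (S : Finset (Fin (2 * n))) (j : Fin (2 * n)) (hS : S ∈ M) :
    insert j S ∈ M := by
  rw [hiddenShiftCert_eq_image_pairCert] at hM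
  obtain ⟨d, -, rfl⟩ := mem_image.1 hM
  exact insert_mem_pairCert j hS

theorem empty_notMem_of_mem_hiddenShiftCert {M : Finset (Finset (Fin (2 * n)))}
    (hM : M ∈ hiddenShiftCert n) : ∅ ∉ M := by
  rw [hiddenShiftCert_eq_image_pairCert] at hM
  obtain ⟨d, -, rfl⟩ := mem_image.1 hM
  exact empty_notMem_pairCert

end HiddenShift

/-- The hidden shift certificate structure admits a dual-feasible solution of
objective value `Ω(n^{1/3})`. -/
theorem hiddenShift_dual_lower_bound :
    ∃ c : ℝ, 0 < c ∧ ∀ n : ℕ, 1 ≤ n →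
      ∃ α : Finset (Fin (2 * n)) → Finset (Finset (Fin (2 * n))) → ℝ,
        DualFeasible (2 * n) (hiddenShiftCert n) α ∧
        c * (n : ℝ) ^ ((1 : ℝ) / 3) ≤
          Real.sqrt (∑ M ∈ hiddenShiftCert n, (α ∅ M) ^ 2) := by
  refine ⟨1 / 2, by norm_num, fun n hn => ?_⟩
  set t := (n : ℝ) ^ ((1 : ℝ) / 6)
  have ht : 0 < t := by positivity
  have ht6 : (n : ℝ) = t ^ 6 := by
    rw [← Real.rpow_natCast, ← Real.rpow_mul n.cast_nonneg]; norm_num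
  have ht2 : (n : ℝ) ^ ((1 : ℝ) / 3) = t ^ 2 := by
    rw [← Real.rpow_natCast, ← Real.rpow_mul n.cast_nonneg]; norm_num
  set A := 1 / (2 * t)
  set δ := 1 / (2 * t ^ 3)
  have hA : 0 ≤ A := by positivity
  refine ⟨levelDual (ramp A δ), dualFeasible_levelDual _
    (fun _ => insert_mem_of_mem_hiddenShiftCert) (fun S j _ => card_filter_hiddenShiftCert_le S j)
    (fun k => ?_) (fun k => ?_), ?_⟩
  · calc (#(hiddenShiftCert n) : ℝ) * (ramp A δ k - ramp A δ (k + 1)) ^ 2 ≤ n * δ ^ 2 := by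
          rw [card_hiddenShiftCert]
          exact mul_le_mul_of_nonneg_left (sq_ramp_sub_ramp_succ_le k) n.cast_nonneg
      _ ≤ 1 / 2 := by rw [ht6]; simp only [δ]; field_simp; norm_num
  · calc (k : ℝ) * ramp A δ k ^ 2 ≤ A ^ 3 / δ := cast_mul_sq_ramp_le hA (by positivity) k
      _ ≤ 1 / 2 := by simp only [A, δ]; field_simp; norm_num
  · rw [sum_sq_levelDual_empty _ fun _ => empty_notMem_of_mem_hiddenShiftCert,
      card_hiddenShiftCert, ramp_zero hA, ht2, Real.le_sqrt (by positivity) (by positivity), ht6]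
    simp only [A]
    field_simp
    norm_num
end

section
/- Let q ≥ 2 and n ≥ 1 be integers and let C be a non-empty finite index set. For each M ∈ C let A_M ⊆ [n] be non-empty, a_M ∈ A_M, T_M an orthogonal array of size q^{|A_M|−1} on A_M, X_M = {x ∈ [q]^n : x_{A_M} ∈ T_M}, L_M a collection of subsets S ⊆ [n] with a_M ∉ S, and β_S(M) ∈ ℝ for S ∈ L_M. Let Γ̂ be the real matrix with rows indexed by {(x,M) : M ∈ C, x ∈ X_M} and columns indexed by [q]^n, with entries Γ̂[(x,M), y] = sqrt(q)·Σ_{S∈L_M} β_S(M)·E_S[x,y]. Then Γ̂ᵀΓ̂ = Σ_{M∈C} Σ_{S∈L_M} β_S(M)²·E_S, and consequently ‖Γ̂‖ = max_{S⊆[n]} sqrt(Σ_{M∈C : S∈L_M} β_S(M)²). -/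
open Matrix

/-- The projector matrices `E_S` on `[q]^n`:
`E_S[x,y] = Π_{j∈S} ([x_j = y_j] − 1/q) · Π_{j∉S} (1/q)`. -/
noncomputable def ES (q n : ℕ) (S : Finset (Fin n)) :
    Matrix (Fin n → Fin q) (Fin n → Fin q) ℝ :=
  Matrix.of fun x y => ∏ j : Fin n,
    if j ∈ S then ((if x j = y j then 1 else 0) - 1 / q) else (1 / q : ℝ)

/-- `T` is an orthogonal array of size `q^(|A|-1)` on the index set `A`:
for every coordinate `i ∈ A` and every assignment of values to the other
coordinates, exactly one value of coordinate `i` yields an element of `T`. -/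
def IsOA {n : ℕ} (q : ℕ) (A : Finset (Fin n)) (T : Finset ({i // i ∈ A} → Fin q)) : Prop :=
  ∀ (i : {i // i ∈ A}) (z : {i // i ∈ A} → Fin q), ∃! v : Fin q, Function.update z i v ∈ T

/-- The spectral (`ℓ₂ → ℓ₂` operator) norm of a matrix. -/
noncomputable def specNorm {𝕜 : Type*} [RCLike 𝕜] {m l : Type*} [Fintype m] [Fintype l]
    [DecidableEq l] (A : Matrix m l 𝕜) : ℝ :=
  ‖LinearMap.toContinuousLinearMap (Matrix.toEuclideanLin A)‖

/-! The matrices `E_S` are Kronecker products over the coordinates of the averaging projection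
`J = (1/q)𝟙𝟙ᵀ` (for `j ∉ S`) and `1 - J` (for `j ∈ S`), so they form a resolution of the identity
by nonzero orthogonal projections. In block `M` every `E_S` with `S ∈ L_M` is constant along the
coordinate `a_M`, and the orthogonal array meets each line in that direction exactly once, so
summing over `X_M` is `1/q` times summing over all of `[q]^n`: the block contributes
`(Σ_S β_S E_S)² = Σ_S β_S² E_S`. Thus `Γ̂ᵀΓ̂ = Σ_S c_S E_S` with `c_S ≥ 0`, and
`‖Γ̂‖² = max_S c_S`. -/

open Finset

structure IsResolutionOfIdentity {ι κ : Type*} [Fintype ι] [Fintype κ] [DecidableEq κ]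
    (E : ι → Matrix κ κ ℝ) : Prop where
  transpose_eq : ∀ i, (E i)ᵀ = E i
  mul_self : ∀ i, E i * E i = E i
  mul_eq_zero : Pairwise fun i j => E i * E j = 0
  sum_eq_one : ∑ i, E i = 1

namespace IsResolutionOfIdentity

variable {ι κ : Type*} [Fintype ι] [Fintype κ] [DecidableEq κ]
  {E : ι → Matrix κ κ ℝ}

lemma dotProduct_mulVec_eq (hE : IsResolutionOfIdentity E) (i : ι) (w : κ → ℝ) :
    w ⬝ᵥ (E i *ᵥ w) = (E i *ᵥ w) ⬝ᵥ (E i *ᵥ w) := by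
  conv_lhs => rw [← hE.mul_self i, ← mulVec_mulVec, dotProduct_mulVec, ← hE.transpose_eq i,
    vecMul_transpose, hE.transpose_eq i]

lemma dotProduct_mulVec_nonneg (hE : IsResolutionOfIdentity E) (i : ι) (w : κ → ℝ) :
    0 ≤ w ⬝ᵥ (E i *ᵥ w) := by
  rw [hE.dotProduct_mulVec_eq]
  exact dotProduct_self_star_nonneg _

lemma sum_dotProduct_mulVec (hE : IsResolutionOfIdentity E) (w : κ → ℝ) :
    ∑ i, w ⬝ᵥ (E i *ᵥ w) = w ⬝ᵥ w := by
  rw [← dotProduct_sum, ← sum_mulVec, hE.sum_eq_one, one_mulVec]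

lemma sum_smul_mul_sum_smul (hE : IsResolutionOfIdentity E) (s : Finset ι) (b : ι → ℝ) :
    (∑ i ∈ s, b i • E i) * (∑ i ∈ s, b i • E i) = ∑ i ∈ s, b i ^ 2 • E i := by
  rw [sum_mul_sum]
  refine sum_congr rfl fun i hi => ?_
  rw [sum_eq_single_of_mem i hi fun j _ hji => by rw [smul_mul_smul, hE.mul_eq_zero hji.symm,
    smul_zero], smul_mul_smul, hE.mul_self, sq]

end IsResolutionOfIdentity

lemma EuclideanSpace.real_norm_sq_eq_dotProduct {n : Type*} [Fintype n]
    (v : EuclideanSpace ℝ n) : ‖v‖ ^ 2 = v.ofLp ⬝ᵥ v.ofLp := by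
  rw [EuclideanSpace.real_norm_sq_eq]
  simp [dotProduct, sq]

section SpecNorm

variable {m l : Type*} [Fintype m] [Fintype l] [DecidableEq l]

lemma norm_toEuclideanLin_sq (Γ : Matrix m l ℝ) (v : EuclideanSpace ℝ l) :
    ‖toEuclideanLin Γ v‖ ^ 2 = v.ofLp ⬝ᵥ ((Γᵀ * Γ) *ᵥ v.ofLp) := by
  rw [EuclideanSpace.real_norm_sq_eq_dotProduct, ← mulVec_mulVec, dotProduct_mulVec,
    vecMul_transpose]
  rfl

lemma specNorm_le_of_dotProduct_le (Γ : Matrix m l ℝ) {c : ℝ} (hc : 0 ≤ c)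
    (h : ∀ w, w ⬝ᵥ ((Γᵀ * Γ) *ᵥ w) ≤ c ^ 2 * (w ⬝ᵥ w)) : specNorm Γ ≤ c := by
  refine ContinuousLinearMap.opNorm_le_bound _ hc fun v => ?_
  have hv := h v.ofLp
  rw [← norm_toEuclideanLin_sq, ← EuclideanSpace.real_norm_sq_eq_dotProduct, ← mul_pow] at hv
  exact (pow_le_pow_iff_left₀ (norm_nonneg _) (by positivity) two_ne_zero).mp hv

lemma le_specNorm_of_dotProduct_eq (Γ : Matrix m l ℝ) {c : ℝ} (hc : 0 ≤ c) {w : l → ℝ}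
    (hw : w ≠ 0) (h : w ⬝ᵥ ((Γᵀ * Γ) *ᵥ w) = c ^ 2 * (w ⬝ᵥ w)) : c ≤ specNorm Γ := by
  set v : EuclideanSpace ℝ l := WithLp.toLp 2 w
  have hv : 0 < ‖v‖ := norm_pos_iff.mpr fun h0 => hw (congrArg WithLp.ofLp h0)
  have hΓv : ‖toEuclideanLin Γ v‖ = c * ‖v‖ := by
    rw [← pow_left_inj₀ (norm_nonneg _) (by positivity) two_ne_zero, norm_toEuclideanLin_sq,
      mul_pow, EuclideanSpace.real_norm_sq_eq_dotProduct]
    exact h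
  refine le_of_mul_le_mul_right ?_ hv
  rw [← hΓv]
  exact (LinearMap.toContinuousLinearMap (toEuclideanLin Γ)).le_opNorm v

variable {ι κ : Type*} [Fintype ι] [Fintype κ] [DecidableEq κ] {E : ι → Matrix κ κ ℝ}

theorem IsResolutionOfIdentity.specNorm_eq_sup'_sqrt [Nonempty ι]
    (hE : IsResolutionOfIdentity E) (hne : ∀ i, E i ≠ 0) {c : ι → ℝ} (hc : ∀ i, 0 ≤ c i)
    (Γ : Matrix m κ ℝ) (hΓ : Γᵀ * Γ = ∑ i, c i • E i) :
    specNorm Γ = univ.sup' univ_nonempty fun i => √(c i) := by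
  have hquad : ∀ w, w ⬝ᵥ ((Γᵀ * Γ) *ᵥ w) = ∑ i, c i * (w ⬝ᵥ (E i *ᵥ w)) := fun w => by
    simp only [hΓ, sum_mulVec, dotProduct_sum, smul_mulVec, dotProduct_smul, smul_eq_mul]
  apply le_antisymm
  · refine specNorm_le_of_dotProduct_le Γ
      (le_sup'_of_le _ (mem_univ (Classical.arbitrary ι)) (Real.sqrt_nonneg _)) fun w => ?_
    rw [hquad, ← hE.sum_dotProduct_mulVec w, mul_sum]
    refine sum_le_sum fun i _ => mul_le_mul_of_nonneg_right ?_ (hE.dotProduct_mulVec_nonneg i w)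
    calc c i = √(c i) ^ 2 := (Real.sq_sqrt (hc i)).symm
      _ ≤ _ := pow_le_pow_left₀ (Real.sqrt_nonneg _) (le_sup' (fun i => √(c i)) (mem_univ i)) 2
  · refine sup'_le _ _ fun i _ => ?_
    obtain ⟨w, hw⟩ : ∃ w, E i *ᵥ w ≠ 0 := by
      by_contra! h
      exact hne i (ext_iff_mulVec.mpr fun w => by rw [h, zero_mulVec])
    refine le_specNorm_of_dotProduct_eq Γ (Real.sqrt_nonneg _) hw ?_
    rw [hquad, sum_eq_single i, Real.sq_sqrt (hc i), mulVec_mulVec, hE.mul_self]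
    · intro j _ hji
      rw [mulVec_mulVec, hE.mul_eq_zero hji, zero_mulVec, dotProduct_zero, mul_zero]
    · simp
    
end SpecNorm

section PiKronecker

variable {ι α : Type*} [Fintype ι]

def Matrix.piKronecker (F : ι → Matrix α α ℝ) : Matrix (ι → α) (ι → α) ℝ :=
  of fun x y => ∏ j, F j (x j) (y j)

lemma Matrix.piKronecker_transpose (F : ι → Matrix α α ℝ) :
    (piKronecker F)ᵀ = piKronecker fun j => (F j)ᵀ := rfl

lemma Matrix.piKronecker_mul [DecidableEq ι] [Fintype α] (F G : ι → Matrix α α ℝ) :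
    piKronecker F * piKronecker G = piKronecker fun j => F j * G j := by
  ext x y
  simp only [piKronecker, mul_apply, of_apply, ← prod_mul_distrib]
  exact (Fintype.prod_sum fun j v => F j (x j) v * G j v (y j)).symm

lemma Matrix.piKronecker_eq_zero {F : ι → Matrix α α ℝ} {j : ι} (hj : F j = 0) :
    piKronecker F = 0 := by
  ext x y
  exact prod_eq_zero (mem_univ j) (by rw [hj, zero_apply])

lemma Matrix.piKronecker_one [DecidableEq ι] [DecidableEq α] :
    piKronecker (fun _ : ι => (1 : Matrix α α ℝ)) = 1 := by
  ext x y
  simp only [piKronecker, of_apply, one_apply, prod_boole, mem_univ, true_implies, funext_iff]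

lemma Matrix.sum_piKronecker_ite [DecidableEq ι] (F G : ι → Matrix α α ℝ) :
    ∑ S : Finset ι, piKronecker (fun j => if j ∈ S then F j else G j) =
      piKronecker fun j => F j + G j := by
  ext x y
  simp only [piKronecker, sum_apply, of_apply, add_apply, Fintype.prod_add]
  refine sum_congr rfl fun S _ => ?_
  rw [← prod_mul_prod_compl S]
  congr 1 <;> refine prod_congr rfl fun j hj => ?_
  · rw [if_pos hj]
  · rw [if_neg (mem_compl.mp hj)]

end PiKronecker

section ProjectorES

noncomputable def avgMatrix (q : ℕ) : Matrix (Fin q) (Fin q) ℝ := of fun _ _ => 1 / q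

lemma avgMatrix_transpose (q : ℕ) : (avgMatrix q)ᵀ = avgMatrix q := rfl

lemma isIdempotentElem_avgMatrix {q : ℕ} (hq : q ≠ 0) : IsIdempotentElem (avgMatrix q) := by
  ext u v
  simp [avgMatrix, mul_apply]
  field_simp

lemma ES_eq_piKronecker (q n : ℕ) (S : Finset (Fin n)) :
    ES q n S = piKronecker fun j => if j ∈ S then 1 - avgMatrix q else avgMatrix q := by
  ext x y
  simp only [ES, piKronecker, of_apply]
  refine prod_congr rfl fun j _ => ?_
  split_ifs <;> simp_all [avgMatrix, one_apply]

lemma isResolutionOfIdentity_ES {q : ℕ} (hq : q ≠ 0) (n : ℕ) :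
    IsResolutionOfIdentity (ES q n) where
  transpose_eq S := by
    rw [ES_eq_piKronecker, piKronecker_transpose]
    congr 1
    ext1 j
    split_ifs <;> simp [avgMatrix_transpose]
  mul_self S := by
    have hJ := isIdempotentElem_avgMatrix hq
    rw [ES_eq_piKronecker, piKronecker_mul]
    congr 1
    ext1 j
    split_ifs
    exacts [hJ.one_sub.eq, hJ.eq]
  mul_eq_zero S S' hSS' := by
    have hJ := isIdempotentElem_avgMatrix hq
    obtain ⟨j, hj⟩ : ∃ j, ¬(j ∈ S ↔ j ∈ S') := by
      by_contra! h
      exact hSS' (Finset.ext h)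
    change ES q n S * ES q n S' = 0
    rw [ES_eq_piKronecker, ES_eq_piKronecker, piKronecker_mul]
    refine piKronecker_eq_zero (j := j) ?_
    by_cases hS : j ∈ S <;> by_cases hS' : j ∈ S' <;> simp only [hS, hS', if_true, if_false]
    exacts [absurd (iff_of_true hS hS') hj, hJ.one_sub_mul_self, hJ.mul_one_sub_self,
      absurd (iff_of_false hS hS') hj]
  sum_eq_one := by
    simp_rw [ES_eq_piKronecker]
    rw [sum_piKronecker_ite]
    simp only [sub_add_cancel, piKronecker_one]

lemma ES_ne_zero {q : ℕ} (hq : 2 ≤ q) (n : ℕ) (S : Finset (Fin n)) : ES q n S ≠ 0 := by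
  have hq' : (1 : ℝ) / q < 1 := by
    rw [div_lt_one (by positivity)]
    exact_mod_cast hq
  intro h0
  have hdiag : ES q n S (fun _ => ⟨0, by omega⟩) (fun _ => ⟨0, by omega⟩) = 0 := by
    rw [h0, Matrix.zero_apply]
  simp only [ES, of_apply] at hdiag
  refine (prod_pos fun j _ => ?_).ne' hdiag
  split_ifs
  · simpa using hq'
  · positivity

lemma ES_update_apply_of_notMem {q n : ℕ} {S : Finset (Fin n)} {a : Fin n} (ha : a ∉ S)
    (x y : Fin n → Fin q) (v : Fin q) :
    ES q n S (Function.update x a v) y = ES q n S x y := by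
  simp only [ES, of_apply]
  refine prod_congr rfl fun j _ => ?_
  by_cases hj : j = a
  · subst hj
    simp [ha]
  · rw [Function.update_of_ne hj]

end ProjectorES

section OrthogonalArray

variable {ι α β : Type*} [Fintype ι] [DecidableEq ι] [Fintype α] [AddCommMonoid β]

lemma sum_product_update_eq_sum {s : Finset (ι → α)} {a : ι}
    (hs : ∀ x, ∃! v, Function.update x a v ∈ s) (f : (ι → α) → β) :
    ∑ p ∈ s ×ˢ univ, f (Function.update p.1 a p.2) = ∑ x, f x := by
  refine sum_bij (fun p _ => Function.update p.1 a p.2) (fun _ _ => mem_univ _) ?_ ?_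
    (fun _ _ => rfl)
  · rintro ⟨x, v⟩ hx ⟨x', v'⟩ hx' heq
    simp only [mem_product, mem_univ, and_true] at hx hx' heq
    have hline : ∀ w, Function.update x a w = Function.update x' a w := fun w => by
      rw [← Function.update_idem v w x, heq, Function.update_idem]
    have hxa : x a = x' a := (hs x).unique (by rwa [Function.update_eq_self])
      (by rwa [hline, Function.update_eq_self])
    have hv : v = v' := by simpa using congrFun heq a
    rw [← Function.update_eq_self a x, hline, hxa, Function.update_eq_self, hv]
  · intro y _
    obtain ⟨v, hv, -⟩ := hs y
    exact ⟨(Function.update y a v, y a), mem_product.mpr ⟨hv, mem_univ _⟩, by simp⟩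

lemma card_smul_sum_eq_sum_of_existsUnique_update {s : Finset (ι → α)} {a : ι}
    (hs : ∀ x, ∃! v, Function.update x a v ∈ s) (f : (ι → α) → β)
    (hf : ∀ x v, f (Function.update x a v) = f x) :
    Fintype.card α • ∑ x ∈ s, f x = ∑ x, f x := by
  rw [← sum_product_update_eq_sum hs f, sum_product, smul_sum]
  simp [hf]

end OrthogonalArray

lemma IsOA.existsUnique_update {n q : ℕ} {A : Finset (Fin n)} {T : Finset ({i // i ∈ A} → Fin q)}
    (hT : IsOA q A T) {a : Fin n} (ha : a ∈ A) (x : Fin n → Fin q) :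
    ∃! v, Function.update x a v ∈
      univ.filter fun y : Fin n → Fin q => (fun i : {i // i ∈ A} => y i.1) ∈ T := by
  have hres : ∀ v, (fun i : {i // i ∈ A} => Function.update x a v i.1) =
      Function.update (fun i : {i // i ∈ A} => x i.1) ⟨a, ha⟩ v := fun v =>
    Function.update_comp_eq_of_injective x Subtype.val_injective ⟨a, ha⟩ v
  simpa only [mem_filter, mem_univ, true_and, hres] using hT ⟨a, ha⟩ _

lemma sum_subtype_mem_eq_sum_sum {C κ β : Type*} [Fintype C] [Fintype κ] [DecidableEq κ]
    [AddCommMonoid β] (X : C → Finset κ) [Fintype {z : C × κ // z.2 ∈ X z.1}] (f : C × κ → β) :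
    ∑ z : {z : C × κ // z.2 ∈ X z.1}, f z.1 = ∑ M, ∑ x ∈ X M, f (M, x) := by
  rw [← sum_subtype (univ.filter fun z : C × κ => z.2 ∈ X z.1) (by simp) f, sum_filter,
    Fintype.sum_prod_type]
  simp [sum_ite_mem]

lemma IsOA.sum_mul_sum_ES_eq {q n : ℕ} {A : Finset (Fin n)}
    {T : Finset ({i // i ∈ A} → Fin q)} (hT : IsOA q A T) (hq : q ≠ 0) {a : Fin n} (ha : a ∈ A)
    {L : Finset (Finset (Fin n))} (hL : ∀ S ∈ L, a ∉ S) (β : Finset (Fin n) → ℝ)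
    (y z : Fin n → Fin q) :
    ∑ x ∈ univ.filter (fun x : Fin n → Fin q => (fun i : {i // i ∈ A} => x i.1) ∈ T),
      (√q * ∑ S ∈ L, β S * ES q n S x y) * (√q * ∑ S ∈ L, β S * ES q n S x z) =
    ∑ S ∈ L, β S ^ 2 * ES q n S y z := by
  have hE := isResolutionOfIdentity_ES hq n
  set X := univ.filter fun x : Fin n → Fin q => (fun i : {i // i ∈ A} => x i.1) ∈ T
  set B : Matrix _ _ ℝ := ∑ S ∈ L, β S • ES q n S
  have hB : ∀ x y, B x y = ∑ S ∈ L, β S * ES q n S x y := fun x y => by simp [B, Matrix.sum_apply]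
  have hBsymm : ∀ x y, B x y = B y x := fun x y => by
    rw [← transpose_apply B, transpose_sum]
    simp only [transpose_smul, hE.transpose_eq]
    rfl
  have hBupd : ∀ x v y, B (Function.update x a v) y = B x y := fun x v y => by
    simp only [hB]
    exact sum_congr rfl fun S hS => by rw [ES_update_apply_of_notMem (hL S hS)]
  calc _ = q * ∑ x ∈ X, B x y * B x z := by
        rw [mul_sum]
        refine sum_congr rfl fun x _ => ?_
        rw [hB, hB, mul_mul_mul_comm, Real.mul_self_sqrt (Nat.cast_nonneg _)]
    _ = ∑ x, B x y * B x z := by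
        simpa using card_smul_sum_eq_sum_of_existsUnique_update (hT.existsUnique_update ha)
          (fun x => B x y * B x z) fun x v => by simp only [hBupd]
    _ = (B * B) y z := by simp only [mul_apply, hBsymm y]
    _ = _ := by
        rw [hE.sum_smul_mul_sum_smul]
        simp [Matrix.sum_apply]

theorem hat_gamma_norm_general (q n : ℕ) (hq : 2 ≤ q)
    {C : Type*} [Fintype C]
    (A : C → Finset (Fin n))
    (a : C → Fin n) (ha : ∀ M, a M ∈ A M)
    (T : ∀ M, Finset ({i // i ∈ A M} → Fin q))
    (hT : ∀ M, IsOA q (A M) (T M))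
    (XM : C → Finset (Fin n → Fin q))
    (hXM : ∀ M, XM M = Finset.univ.filter fun x : Fin n → Fin q =>
      (fun i : {i // i ∈ A M} => x i.1) ∈ T M)
    (L : C → Finset (Finset (Fin n)))
    (hL : ∀ M, ∀ S ∈ L M, a M ∉ S)
    (β : C → Finset (Fin n) → ℝ)
    (Γ : Matrix {z : C × (Fin n → Fin q) // z.2 ∈ XM z.1} (Fin n → Fin q) ℝ)
    (hΓ : Γ = Matrix.of fun z y =>
      Real.sqrt q * ∑ S ∈ L z.1.1, β z.1.1 S * ES q n S z.1.2 y) :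
    Γᵀ * Γ = ∑ M : C, ∑ S ∈ L M, (β M S) ^ 2 • ES q n S ∧
    specNorm Γ = Finset.univ.sup' ⟨∅, Finset.mem_univ ∅⟩
      (fun S : Finset (Fin n) =>
        Real.sqrt (∑ M ∈ Finset.univ.filter (fun M : C => S ∈ L M), (β M S) ^ 2)) := by
  have hq0 : q ≠ 0 := by omega
  have hgram : Γᵀ * Γ = ∑ M, ∑ S ∈ L M, β M S ^ 2 • ES q n S := by
    ext y z
    simp only [hΓ, mul_apply, transpose_apply, of_apply, Matrix.sum_apply, Matrix.smul_apply,
      smul_eq_mul]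
    rw [sum_subtype_mem_eq_sum_sum XM fun p => (√q * ∑ S ∈ L p.1, β p.1 S * ES q n S p.2 y) *
      (√q * ∑ S ∈ L p.1, β p.1 S * ES q n S p.2 z)]
    refine sum_congr rfl fun M _ => ?_
    rw [hXM M]
    exact (hT M).sum_mul_sum_ES_eq hq0 (ha M) (hL M) (β M) y z
  refine ⟨hgram, (isResolutionOfIdentity_ES hq0 n).specNorm_eq_sup'_sqrt (ES_ne_zero hq n)
    (fun S => sum_nonneg fun M _ => sq_nonneg _) Γ ?_⟩
  rw [hgram, sum_comm' (t' := univ) (s' := fun S => univ.filter fun M => S ∈ L M) (by simp)]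
  simp_rw [sum_smul]

/-- For `Γ̂[(x,M),y] = sqrt(q)·Σ_{S∈L_M} β_S(M)·E_S[x,y]` (with all `S ∈ L_M`
omitting `a_M ∈ A_M`), one has `Γ̂ᵀΓ̂ = Σ_M Σ_{S∈L_M} β_S(M)²·E_S` and
`‖Γ̂‖ = max_S sqrt(Σ_{M : S∈L_M} β_S(M)²)`. -/
theorem hat_gamma_norm (q n : ℕ) (hq : 2 ≤ q) (hn : 1 ≤ n)
    {C : Type*} [Fintype C] [Nonempty C] [DecidableEq C]
    (A : C → Finset (Fin n)) (hA : ∀ M, (A M).Nonempty)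
    (a : C → Fin n) (ha : ∀ M, a M ∈ A M)
    (T : ∀ M, Finset ({i // i ∈ A M} → Fin q))
    (hT : ∀ M, IsOA q (A M) (T M))
    (XM : C → Finset (Fin n → Fin q))
    (hXM : ∀ M, XM M = Finset.univ.filter fun x : Fin n → Fin q =>
      (fun i : {i // i ∈ A M} => x i.1) ∈ T M)
    (L : C → Finset (Finset (Fin n)))
    (hL : ∀ M, ∀ S ∈ L M, a M ∉ S)
    (β : C → Finset (Fin n) → ℝ)
    (Γ : Matrix {z : C × (Fin n → Fin q) // z.2 ∈ XM z.1} (Fin n → Fin q) ℝ)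
    (hΓ : Γ = Matrix.of fun z y =>
      Real.sqrt q * ∑ S ∈ L z.1.1, β z.1.1 S * ES q n S z.1.2 y) :
    Γᵀ * Γ = ∑ M : C, ∑ S ∈ L M, (β M S) ^ 2 • ES q n S ∧
    specNorm Γ = Finset.univ.sup' ⟨∅, Finset.mem_univ ∅⟩
      (fun S : Finset (Fin n) =>
        Real.sqrt (∑ M ∈ Finset.univ.filter (fun M : C => S ∈ L M), (β M S) ^ 2)) :=
  hat_gamma_norm_general q n hq A a ha T hT XM hXM L hL β Γ hΓ
end
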